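/- Let n ≥ 1, let the cyclic group C_n = ℤ/nℤ act on the 2-sphere S² = {(z, t) ∈ ℂ × ℝ : |z|² + t² = 1} by k • (z, t) = (e^{2πik/n} z, t), and let X = {(z, t) ∈ S² : z^n ∈ ℝ_{≥0}} be the C_n-invariant 1-skeleton consisting of the n meridian arcs at angles 2πk/n together with the two poles. Then X is a split C_n-space: the orbit quotient map π : X → X / C_n admits a continuous section φ : X / C_n → X (i.e., a continuous map with π ∘ φ = id). -/

import Mathlib

/-- The 2-sphere `S² = {(z, t) ∈ ℂ × ℝ : |z|² + t² = 1}`. -/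
def twoSphere : Set (ℂ × ℝ) := {p | ‖p.1‖ ^ 2 + p.2 ^ 2 = 1}

/-- The `C_n`-invariant 1-skeleton `X = {(z, t) ∈ S² : zⁿ ∈ ℝ_{≥0}}`, the union of the `n`
meridian arcs at longitudes `2πk/n` together with the two poles, topologized as a subspace
of `ℂ × ℝ`. -/
def meridianSkeleton (n : ℕ) : Set (ℂ × ℝ) :=
  {p ∈ twoSphere | ∃ r : ℝ, 0 ≤ r ∧ p.1 ^ n = (r : ℂ)}

/-- The rotation action of `k ∈ C_n = ℤ/nℤ` on `ℂ × ℝ`: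
`k • (z, t) = (e^{2πik/n} z, t)`. -/
noncomputable def cyclicRot (n : ℕ) (k : ZMod n) (p : ℂ × ℝ) : ℂ × ℝ :=
  (Complex.exp (2 * (Real.pi : ℂ) * Complex.I * (k.val : ℂ) / (n : ℂ)) * p.1, p.2)

/-- The orbit relation of the `C_n`-action on the 1-skeleton `X`. -/
def skeletonOrbitRel (n : ℕ) (p q : meridianSkeleton n) : Prop :=
  ∃ k : ZMod n, cyclicRot n k (p : ℂ × ℝ) = (q : ℂ × ℝ)

/-- The canonical representative `(|z|, t)` of a point `(z, t)` of the skeleton lies in the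
skeleton. -/
lemma absRep_mem (n : ℕ) (p : meridianSkeleton n) :
    (((‖(p : ℂ × ℝ).1‖ : ℝ) : ℂ), (p : ℂ × ℝ).2) ∈ meridianSkeleton n := by
  obtain ⟨hS, r, hr, hzn⟩ := p.2
  refine ⟨?_, ‖(p : ℂ × ℝ).1‖ ^ n, by positivity, ?_⟩
  · show ‖_‖ ^ 2 + _ = 1
    rwa [Complex.norm_real, Real.norm_eq_abs, abs_of_nonneg (norm_nonneg _)]
  · push_cast
    ring

/-- The 1-skeleton `X ⊆ S²` is a split `C_n`-space: the quotient map
`π : X → X / C_n` onto the orbit space admits a continuous section `φ`. -/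
theorem meridianSkeleton_isSplit (n : ℕ) (hn : 1 ≤ n) :
    ∃ φ : Quot (skeletonOrbitRel n) → meridianSkeleton n,
      Continuous φ ∧ ∀ a, Quot.mk (skeletonOrbitRel n) (φ a) = a := by
  have hn0 : (n : ℂ) ≠ 0 := Nat.cast_ne_zero.mpr (by omega)
  haveI : NeZero n := ⟨by omega⟩
  set f : meridianSkeleton n → meridianSkeleton n :=
    fun p => ⟨(((‖(p : ℂ × ℝ).1‖ : ℝ) : ℂ), (p : ℂ × ℝ).2), absRep_mem n p⟩ with hf
  have hinv : ∀ p q : meridianSkeleton n, skeletonOrbitRel n p q → f p = f q := by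
    rintro p q ⟨k, hk⟩
    have h1 : Complex.exp (2 * (Real.pi : ℂ) * Complex.I * (k.val : ℂ) / (n : ℂ)) * (p : ℂ × ℝ).1
        = (q : ℂ × ℝ).1 := by rw [← hk]; rfl
    have h2 : (p : ℂ × ℝ).2 = (q : ℂ × ℝ).2 := by rw [← hk]; rfl
    have habs : ‖(q : ℂ × ℝ).1‖ = ‖(p : ℂ × ℝ).1‖ := by
      rw [← h1, norm_mul, Complex.norm_exp]
      have : (2 * (Real.pi : ℂ) * Complex.I * (k.val : ℂ) / (n : ℂ)).re = 0 := by
        simp [Complex.div_re, Complex.mul_re, Complex.mul_im, Complex.natCast_im,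
          Complex.natCast_re, -ZMod.natCast_val]
      rw [this, Real.exp_zero, one_mul]
    simp only [hf, Subtype.mk.injEq, Prod.mk.injEq]
    exact ⟨by rw [habs], h2⟩
  refine ⟨Quot.lift f hinv, ?_, ?_⟩
  · apply continuous_quot_lift
    apply Continuous.subtype_mk
    exact ((Complex.continuous_ofReal.comp (continuous_norm.comp
      (continuous_fst.comp continuous_subtype_val))).prodMk
      (continuous_snd.comp continuous_subtype_val))
  · intro a
    induction a using Quot.ind with
    | _ p =>
      refine Quot.sound ?_
      obtain ⟨hS, r, hr, hzn⟩ := p.2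
      set z : ℂ := (p : ℂ × ℝ).1 with hz
      by_cases hz0 : z = 0
      · refine ⟨0, ?_⟩
        have hp : (p : ℂ × ℝ) = (0, (p : ℂ × ℝ).2) := by
          rw [Prod.ext_iff]; exact ⟨hz0, rfl⟩
        conv_rhs => rw [hp]
        simp [cyclicRot, f, ← hz, hz0]
      · -- `z / |z|` is an `n`-th root of unity
        have habsz : (0:ℝ) < ‖z‖ := by
          simpa using norm_pos_iff.mpr hz0
        have habsn : ((‖z‖ : ℝ) : ℂ) ^ n = z ^ n := by
          have : ‖z‖ ^ n = r := by
            rw [← norm_pow, hzn, Complex.norm_real, Real.norm_eq_abs, abs_of_nonneg hr]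
          rw [hzn]
          exact_mod_cast congrArg (Complex.ofReal ·) this
        have hzeta : (z / ((‖z‖ : ℝ) : ℂ)) ^ n = 1 := by
          rw [div_pow, ← habsn, div_self]
          exact pow_ne_zero _ (by exact_mod_cast habsz.ne')
        obtain ⟨i, hi, hie⟩ :=
          (Complex.isPrimitiveRoot_exp n (by omega)).eq_pow_of_pow_eq_one hzeta
        refine ⟨(i : ZMod n), ?_⟩
        have hval : ((i : ZMod n).val : ℂ) = (i : ℂ) := by
          rw [ZMod.val_natCast_of_lt hi]
        have hexp : Complex.exp (2 * (Real.pi : ℂ) * Complex.I * ((i : ZMod n).val : ℂ) / (n : ℂ))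
            = z / ((‖z‖ : ℝ) : ℂ) := by
          rw [hval, ← hie, ← Complex.exp_nat_mul]
          congr 1
          field_simp
        show (Complex.exp _ * ((‖z‖ : ℝ) : ℂ), (p : ℂ × ℝ).2) = ((p : ℂ × ℝ).1, (p : ℂ × ℝ).2)
        rw [hexp, div_mul_cancel₀]
        exact_mod_cast habsz.ne'
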